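/- Let G be a finite simple bipartite graph whose vertex set is partitioned into parts X and Y (every edge of G has one endpoint in X and one endpoint in Y). Then the number of distinct nonempty subsets X' ⊆ X such that X' = N(u) for some u ∈ Y is at most (4^{∇₁(G)} + 2∇₁(G))·|X|. -/

import Mathlib

/-- `H` is a shallow minor of `G` at depth `d`. -/
def IsShallowMinorAtDepth {V W : Type*} (G : SimpleGraph V) (d : ℕ)
    (H : SimpleGraph W) : Prop :=
  ∃ ψ : W → Set V,
    (∀ w, (ψ w).Nonempty) ∧
    (∀ w₁ w₂, w₁ ≠ w₂ → Disjoint (ψ w₁) (ψ w₂)) ∧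
    (∀ w, ∃ c : ψ w, ∀ u : ψ w,
      ∃ p : (SimpleGraph.induce (ψ w) G).Walk c u, p.length ≤ d) ∧
    (∀ w₁ w₂, w₁ ≠ w₂ →
      (H.Adj w₁ w₂ ↔ ∃ v₁ ∈ ψ w₁, ∃ v₂ ∈ ψ w₂, G.Adj v₁ v₂))

/-- The greatest reduced average density (grad) of rank `d`. -/
noncomputable def grad {V : Type*} (G : SimpleGraph V) (d : ℕ) : ℝ :=
  sSup { q : ℝ | ∃ (n : ℕ) (H : SimpleGraph (Fin n)), 0 < n ∧
    IsShallowMinorAtDepth G d H ∧ q = (H.edgeSet.ncard : ℝ) / (n : ℝ) }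

/-!
Pick one representative in `Y` for each neighbourhood. A partial map `s` sending
representatives to neighbours in `X` contracts stars into a depth-1 minor `M` of `G` on `X`.
Take such an `s` assigning as many vertices as possible subject to "assigned vertices ≤ edges of
`M`"; then at most `∇₁ |X|` representatives are assigned, and the neighbourhood of every
unassigned one is a clique of `M` (otherwise assigning it would create a new edge). Every subgraph
of `M` has average degree at most `2∇₁`, so `M` is `⌊2∇₁⌋`-degenerate and has at most
`2^⌊2∇₁⌋ |X| ≤ 4^∇₁ |X|` nonempty cliques.
-/

open SimpleGraph

section Grad

variable {V W : Type*} {G : SimpleGraph V} {d : ℕ}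

theorem IsShallowMinorAtDepth.card_le_card [Finite V] {H : SimpleGraph W}
    (h : IsShallowMinorAtDepth G d H) : Nat.card W ≤ Nat.card V := by
  obtain ⟨ψ, hne, hdisj, -, -⟩ := h
  refine Nat.card_le_card_of_injective (fun w => (hne w).some) fun w₁ w₂ heq => ?_
  by_contra hw
  exact (hdisj w₁ w₂ hw).ne_of_mem (hne w₁).some_mem (hne w₂).some_mem heq

theorem IsShallowMinorAtDepth.of_iso {W' : Type*} {H : SimpleGraph W} {H' : SimpleGraph W'}
    (h : IsShallowMinorAtDepth G d H) (e : H ≃g H') : IsShallowMinorAtDepth G d H' := by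
  obtain ⟨ψ, hne, hdisj, hrad, hadj⟩ := h
  refine ⟨ψ ∘ e.symm, fun w => hne _, fun w₁ w₂ hw => hdisj _ _ (e.symm.injective.ne hw),
    fun w => hrad _, fun w₁ w₂ hw => ?_⟩
  exact e.symm.map_adj_iff.symm.trans (hadj _ _ (e.symm.injective.ne hw))

theorem IsShallowMinorAtDepth.induce {H : SimpleGraph W} (h : IsShallowMinorAtDepth G d H)
    (S : Set W) : IsShallowMinorAtDepth G d (H.induce S) := by
  obtain ⟨ψ, hne, hdisj, hrad, hadj⟩ := h
  exact ⟨fun w => ψ w, fun w => hne _, fun w₁ w₂ hw => hdisj _ _ (Subtype.coe_injective.ne hw),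
    fun w => hrad _, fun w₁ w₂ hw => hadj _ _ (Subtype.coe_injective.ne hw)⟩

theorem isShallowMinorAtDepth_bot_of_nonempty [Nonempty V] (G : SimpleGraph V) (d : ℕ) :
    IsShallowMinorAtDepth G d (⊥ : SimpleGraph Unit) := by
  obtain ⟨v⟩ := ‹Nonempty V›
  refine ⟨fun _ => {v}, fun _ => Set.singleton_nonempty v, fun _ _ h => (h rfl).elim,
    fun _ => ⟨⟨v, rfl⟩, fun u => ?_⟩, fun _ _ h => (h rfl).elim⟩
  obtain rfl : u = ⟨v, rfl⟩ := Subsingleton.elim _ _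
  exact ⟨.nil, Nat.zero_le _⟩

theorem grad_bddAbove [Finite V] (G : SimpleGraph V) (d : ℕ) :
    BddAbove { q : ℝ | ∃ (n : ℕ) (H : SimpleGraph (Fin n)), 0 < n ∧
      IsShallowMinorAtDepth G d H ∧ q = (H.edgeSet.ncard : ℝ) / (n : ℝ) } := by
  classical
  refine ⟨Nat.card V, ?_⟩
  rintro q ⟨n, H, hn, hH, rfl⟩
  have hnV : n ≤ Nat.card V := by simpa using hH.card_le_card
  have hedges : H.edgeSet.ncard ≤ n * n := by
    rw [← Nat.card_coe_set_eq, Nat.card_eq_fintype_card, ← edgeFinset_card]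
    exact card_edgeFinset_le_card_choose_two.trans (by simpa [sq] using Nat.choose_le_pow n 2)
  rw [div_le_iff₀ (by positivity)]
  exact_mod_cast hedges.trans (Nat.mul_le_mul_right n hnV)

theorem le_grad [Finite V] {n : ℕ} {H : SimpleGraph (Fin n)} (hn : 0 < n)
    (h : IsShallowMinorAtDepth G d H) : (H.edgeSet.ncard : ℝ) / n ≤ grad G d :=
  le_csSup (grad_bddAbove G d) ⟨n, H, hn, h, rfl⟩

theorem IsShallowMinorAtDepth.edgeSet_ncard_le [Finite V] [Finite W] {H : SimpleGraph W}
    (h : IsShallowMinorAtDepth G d H) : (H.edgeSet.ncard : ℝ) ≤ grad G d * Nat.card W := by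
  cases isEmpty_or_nonempty W
  · simp [Set.eq_empty_of_isEmpty H.edgeSet]
  have hW : 0 < Nat.card W := Nat.card_pos
  let e : W ≃ Fin (Nat.card W) := Finite.equivFin W
  have := le_grad hW (h.of_iso (Iso.map e H))
  rwa [div_le_iff₀ (by exact_mod_cast hW), ← Nat.card_coe_set_eq,
    ← Nat.card_congr (Iso.map e H).mapEdgeSet, Nat.card_coe_set_eq] at this

theorem grad_nonneg [Nonempty V] [Finite V] (G : SimpleGraph V) (d : ℕ) : 0 ≤ grad G d := by
  simpa using (isShallowMinorAtDepth_bot_of_nonempty G d).edgeSet_ncard_le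

end Grad

section Degeneracy

open Finset

variable {W : Type*} (M : SimpleGraph W) [DecidableRel M.Adj]

theorem exists_degree_le_of_edgeSet_ncard_le [Fintype W] [Nonempty W] {D : ℝ} {k : ℕ}
    (hk : 2 * D < k + 1) (hM : (M.edgeSet.ncard : ℝ) ≤ D * Fintype.card W) :
    ∃ x, M.degree x ≤ k := by
  by_contra! hdeg
  have hsum : (k + 1) * Fintype.card W ≤ 2 * M.edgeSet.ncard := by
    rw [← coe_edgeFinset, Set.ncard_coe_finset, ← sum_degrees_eq_twice_card_edges,
      ← card_univ, mul_comm, ← smul_eq_mul]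
    exact card_nsmul_le_sum _ _ _ fun x _ => hdeg x
  have hW : (0 : ℝ) < Fintype.card W := by exact_mod_cast Fintype.card_pos
  have : ((k : ℝ) + 1) * Fintype.card W ≤ 2 * M.edgeSet.ncard := by exact_mod_cast hsum
  nlinarith

theorem degree_induce_eq_card_filter_adj (S : Finset W) (x : (S : Set W)) :
    (M.induce (S : Set W)).degree x = #{y ∈ S | M.Adj x y} := by
  rw [← card_neighborFinset_eq_degree, ← card_map (Function.Embedding.subtype _)]
  congr 1
  ext y
  simp [and_comm]

theorem exists_card_filter_adj_le_of_edgeSet_ncard_induce_le {D : ℝ} {k : ℕ}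
    (hk : 2 * D < k + 1) {S : Finset W} (hS : S.Nonempty)
    (hM : ((M.induce (S : Set W)).edgeSet.ncard : ℝ) ≤ D * #S) :
    ∃ x ∈ S, #{y ∈ S | M.Adj x y} ≤ k := by
  have : Nonempty (S : Set W) := hS.coe_sort
  obtain ⟨x, hx⟩ := exists_degree_le_of_edgeSet_ncard_le (M.induce (S : Set W)) hk
    (by simpa using hM)
  exact ⟨x, x.2, degree_induce_eq_card_filter_adj M S x ▸ hx⟩

variable [DecidableEq W]

theorem card_clique_containing_le (T : Finset W) (x : W) :
    #(T.powerset.filter fun A : Finset W => x ∈ A ∧ M.IsClique (A : Set W)) ≤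
      2 ^ #{y ∈ T | M.Adj x y} := by
  rw [← card_powerset]
  refine card_le_card_of_injOn (fun A => A.erase x) ?_ ?_
  · intro A hA
    simp only [coe_filter, mem_powerset, Set.mem_ofPred_eq] at hA
    obtain ⟨hAT, hxA, hA⟩ := hA
    simp only [coe_powerset, Set.mem_preimage, Set.mem_powerset_iff, coe_subset]
    intro y hy
    obtain ⟨hyx, hyA⟩ := mem_erase.1 hy
    exact mem_filter.2 ⟨hAT hyA, hA hxA hyA (Ne.symm hyx)⟩
  · intro A hA B hB hAB
    simp only [coe_filter, mem_powerset, Set.mem_ofPred_eq] at hA hB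
    rw [← insert_erase hA.2.1, ← insert_erase hB.2.1]
    exact congrArg (insert x) hAB

theorem card_nonempty_clique_le_of_forall_exists_card_adj_le {k : ℕ}
    (hdeg : ∀ S : Finset W, S.Nonempty → ∃ x ∈ S, #{y ∈ S | M.Adj x y} ≤ k) (T : Finset W) :
    #(T.powerset.filter fun A : Finset W => A.Nonempty ∧ M.IsClique (A : Set W)) ≤ 2 ^ k * #T := by
  induction T using Finset.strongInduction with
  | H T ih =>
  rcases T.eq_empty_or_nonempty with rfl | hT
  · simp
  obtain ⟨x, hxT, hx⟩ := hdeg T hT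
  set C := T.powerset.filter fun A : Finset W => A.Nonempty ∧ M.IsClique (A : Set W)
  have hwith : #(C.filter (x ∈ ·)) ≤ 2 ^ k := by
    refine le_trans (card_le_card fun A hA => ?_) ((card_clique_containing_le M T x).trans
      (Nat.pow_le_pow_right two_pos hx))
    simp only [C, mem_filter] at hA ⊢
    exact ⟨hA.1.1, hA.2, hA.1.2.2⟩
  have hwithout : #(C.filter (x ∉ ·)) ≤ 2 ^ k * #(T.erase x) := by
    refine le_trans (card_le_card fun A hA => ?_) (ih _ (erase_ssubset hxT))
    simp only [C, mem_filter, mem_powerset] at hA ⊢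
    exact ⟨fun y hy => mem_erase.2 ⟨fun h => hA.2 (h ▸ hy), hA.1.1 hy⟩, hA.1.2⟩
  have hT : #(T.erase x) + 1 = #T := card_erase_add_one hxT
  calc #C = #(C.filter (x ∈ ·)) + #(C.filter (x ∉ ·)) := (card_filter_add_card_filter_not _).symm
    _ ≤ 2 ^ k + 2 ^ k * #(T.erase x) := add_le_add hwith hwithout
    _ = 2 ^ k * #T := by rw [← hT]; ring

end Degeneracy

section StarContraction

variable {V : Type*} (G : SimpleGraph V) {X : Set V}

/-- `s u = some x` means that `u` is contracted into `x`. -/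
def starSet (s : V → Option X) (x : X) : Set V :=
  insert (x : V) {u | s u = some x}

def starContraction (s : V → Option X) : SimpleGraph X where
  Adj x y := x ≠ y ∧ ∃ v₁ ∈ starSet s x, ∃ v₂ ∈ starSet s y, G.Adj v₁ v₂
  symm := ⟨fun _ _ ⟨hne, v₁, h₁, v₂, h₂, hadj⟩ => ⟨hne.symm, v₂, h₂, v₁, h₁, hadj.symm⟩⟩
  loopless := ⟨fun _ h => h.1 rfl⟩

variable {G}

theorem isShallowMinorAtDepth_one_starContraction {s : V → Option X}
    (hs : ∀ u x, s u = some x → u ∉ X ∧ G.Adj u x) :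
    IsShallowMinorAtDepth G 1 (starContraction G s) := by
  refine ⟨starSet s, fun x => ⟨x, Set.mem_insert _ _⟩, fun x y hxy => ?_, fun x => ?_,
    fun x y hxy => and_iff_right hxy⟩
  · rw [Set.disjoint_left]
    rintro v (rfl | hvx) (hvy | hvy)
    · exact hxy (Subtype.ext hvy)
    · exact (hs _ _ hvy).1 x.2
    · exact (hs _ _ hvx).1 (hvy ▸ y.2)
    · exact hxy (Option.some_injective _ (hvx.symm.trans hvy))
  · refine ⟨⟨x, Set.mem_insert _ _⟩, fun ⟨v, hv⟩ => ?_⟩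
    rcases hv with rfl | hv
    · exact ⟨.nil, zero_le_one⟩
    · exact ⟨(show (G.induce (starSet s x)).Adj ⟨x, Set.mem_insert _ _⟩ ⟨v, Or.inr hv⟩ from
        (hs _ _ hv).2.symm).toWalk, le_rfl⟩

section Update

variable [DecidableEq V] {s : V → Option X} {u : V}

theorem starSet_subset_update (hu : s u = none) (z x : X) :
    starSet s x ⊆ starSet (Function.update s u (some z)) x := by
  rintro v (rfl | hv)
  · exact Set.mem_insert _ _
  · have hvu : v ≠ u := by rintro rfl; simp [hu] at hv
    exact Or.inr (by simpa [Function.update_of_ne hvu] using hv)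

theorem starContraction_le_update (hu : s u = none) (z : X) :
    starContraction G s ≤ starContraction G (Function.update s u (some z)) :=
  fun x y ⟨hxy, v₁, h₁, v₂, h₂, hadj⟩ =>
    ⟨hxy, v₁, starSet_subset_update hu z x h₁, v₂, starSet_subset_update hu z y h₂, hadj⟩

theorem starContraction_update_adj {z z' : X} (hzz' : z ≠ z') (hu : G.Adj u z') :
    (starContraction G (Function.update s u (some z))).Adj z z' :=
  ⟨hzz', u, Or.inr (by simp), z', Set.mem_insert _ _, hu⟩

end Update

theorem exists_starContraction_isClique [Finite V] (R : Set V) :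
    ∃ s : V → Option X, (∀ u x, s u = some x → u ∈ R ∧ G.Adj u x) ∧
      {u | s u ≠ none}.ncard ≤ (starContraction G s).edgeSet.ncard ∧
      ∀ u ∈ R, s u = none → (starContraction G s).IsClique {x : X | G.Adj u x} := by
  obtain ⟨s, ⟨hsR, hsE⟩, hmax⟩ := Set.exists_max_image
    {s : V → Option X | (∀ u x, s u = some x → u ∈ R ∧ G.Adj u x) ∧
      {u | s u ≠ none}.ncard ≤ (starContraction G s).edgeSet.ncard}
    (fun s => {u | s u ≠ none}.ncard) (Set.toFinite _) ⟨fun _ => none, by simp, by simp⟩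
  classical
  refine ⟨s, hsR, hsE, fun u hu hsu z hz z' hz' hzz' => by_contra fun hnadj => ?_⟩
  -- Assigning `u` to `z` adds the edge `zz'`, so the extended assignment still qualifies.
  set s' := Function.update s u (some z)
  have hu_notMem : u ∉ {w | s w ≠ none} := by simpa using hsu
  have hsupp : {w | s' w ≠ none} = insert u {w | s w ≠ none} := by
    ext w
    rcases eq_or_ne w u with rfl | hwu
    · simp [s']
    · simp [s', hwu]
  have hlt : starContraction G s < starContraction G s' :=
    lt_of_le_of_ne (starContraction_le_update hsu z)
      fun h => hnadj (h ▸ starContraction_update_adj hzz' hz')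
  have hE := Set.ncard_lt_ncard (edgeSet_ssubset_edgeSet.2 hlt)
  have hs'R : ∀ w x, s' w = some x → w ∈ R ∧ G.Adj w x := by
    intro w x hw
    rcases eq_or_ne w u with rfl | hwu
    · obtain rfl : z = x := by simpa [s'] using hw
      exact ⟨hu, hz⟩
    · exact hsR w x (by simpa [s', Function.update_of_ne hwu] using hw)
  have := hmax s' ⟨hs'R, by rw [hsupp, Set.ncard_insert_of_notMem hu_notMem]; omega⟩
  rw [hsupp, Set.ncard_insert_of_notMem hu_notMem] at this
  omega

end StarContraction

section Counting

open Finset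

variable {V : Type*} {G : SimpleGraph V}

theorem two_pow_floor_le_four_rpow {D : ℝ} (hD : 0 ≤ D) : (2 : ℝ) ^ ⌊2 * D⌋₊ ≤ 4 ^ D := by
  rw [← Real.rpow_natCast, show (4 : ℝ) = 2 ^ (2 : ℝ) by norm_num, ← Real.rpow_mul zero_le_two]
  exact Real.rpow_le_rpow_of_exponent_le one_le_two (Nat.floor_le (by positivity))

theorem ncard_le_of_isClique_neighborSet [Finite V] {X U : Set V} (M : SimpleGraph X)
    [DecidableRel M.Adj] {k : ℕ}
    (hdeg : ∀ S : Finset X, S.Nonempty → ∃ x ∈ S, #{y ∈ S | M.Adj x y} ≤ k)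
    (hU : ∀ u ∈ U, (G.neighborSet u).Nonempty ∧ G.neighborSet u ⊆ X ∧
      M.IsClique {x : X | G.Adj u x})
    (hinj : U.InjOn G.neighborSet) :
    U.ncard ≤ 2 ^ k * X.ncard := by
  classical
  have : Fintype X := Fintype.ofFinite X
  let nbhd : V → Finset X := fun u => {x | G.Adj u x}
  have hnbhd : ∀ u ∈ U, G.neighborSet u = Subtype.val '' (nbhd u : Set X) := by
    intro u hu
    rw [show (nbhd u : Set X) = Subtype.val ⁻¹' G.neighborSet u by simp [nbhd]; rfl,
      Subtype.image_preimage_coe, Set.inter_eq_right.2 (hU u hu).2.1]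
  set C := univ.powerset.filter fun A : Finset X => A.Nonempty ∧ M.IsClique (A : Set X)
  calc U.ncard ≤ (C : Set (Finset X)).ncard := by
        refine Set.ncard_le_ncard_of_injOn nbhd (fun u hu => ?_) (fun u hu u' hu' h => ?_)
        · obtain ⟨⟨v, hv⟩, hUX, hclique⟩ := hU u hu
          simp only [C, coe_filter, mem_powerset, subset_univ, true_and]
          exact ⟨⟨⟨v, hUX hv⟩, by simpa [nbhd] using hv⟩, by simpa [nbhd] using hclique⟩
        · exact hinj hu hu' (by rw [hnbhd u hu, hnbhd u' hu', h])
    _ = #C := Set.ncard_coe_finset C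
    _ ≤ 2 ^ k * #(univ : Finset X) := card_nonempty_clique_le_of_forall_exists_card_adj_le M hdeg _
    _ = 2 ^ k * X.ncard := by rw [card_univ, ← Nat.card_eq_fintype_card, Nat.card_coe_set_eq]

theorem ncard_le_of_injOn_neighborSet [Finite V] {X R : Set V} (hRX : Disjoint R X)
    (hR : ∀ u ∈ R, (G.neighborSet u).Nonempty ∧ G.neighborSet u ⊆ X)
    (hinj : R.InjOn G.neighborSet) :
    (R.ncard : ℝ) ≤ ((4 : ℝ) ^ grad G 1 + 2 * grad G 1) * X.ncard := by
  classical
  rcases X.eq_empty_or_nonempty with rfl | ⟨x, -⟩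
  · have : R = ∅ := Set.eq_empty_of_forall_notMem fun u hu =>
      (hR u hu).1.ne_empty (Set.subset_empty_iff.1 (hR u hu).2)
    simp [this]
  have : Nonempty V := ⟨x⟩
  set D := grad G 1
  obtain ⟨s, hsR, hsE, hclique⟩ := exists_starContraction_isClique (X := X) (G := G) R
  set M := starContraction G s
  have hM : IsShallowMinorAtDepth G 1 M := isShallowMinorAtDepth_one_starContraction
    fun u x h => ⟨Set.disjoint_left.1 hRX (hsR u x h).1, (hsR u x h).2⟩
  have hdeg : ∀ S : Finset X, S.Nonempty → ∃ x ∈ S, #{y ∈ S | M.Adj x y} ≤ ⌊2 * D⌋₊ :=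
    fun S hS => exists_card_filter_adj_le_of_edgeSet_ncard_induce_le M (Nat.lt_floor_add_one _) hS
      (by simpa using (hM.induce S).edgeSet_ncard_le)
  have hassigned : ({u | s u ≠ none}.ncard : ℝ) ≤ D * X.ncard := by
    simpa using (Nat.cast_le.2 hsE).trans hM.edgeSet_ncard_le
  have hunassigned : {u ∈ R | s u = none}.ncard ≤ 2 ^ ⌊2 * D⌋₊ * X.ncard :=
    ncard_le_of_isClique_neighborSet M hdeg
      (fun u hu => ⟨(hR u hu.1).1, (hR u hu.1).2, hclique u hu.1 hu.2⟩)
      (hinj.mono fun _ => And.left)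
  have hsplit : R.ncard ≤ {u | s u ≠ none}.ncard + {u ∈ R | s u = none}.ncard :=
    (Set.ncard_le_ncard fun u hu => by by_cases h : s u = none <;> simp [h, hu]).trans
      (Set.ncard_union_le _ _)
  have hD : 0 ≤ D := grad_nonneg G 1
  calc (R.ncard : ℝ) ≤ {u | s u ≠ none}.ncard + {u ∈ R | s u = none}.ncard := by
        exact_mod_cast hsplit
    _ ≤ D * X.ncard + 2 ^ ⌊2 * D⌋₊ * X.ncard :=
        add_le_add hassigned (by exact_mod_cast hunassigned)
    _ ≤ ((4 : ℝ) ^ D + 2 * D) * X.ncard := by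
        have := two_pow_floor_le_four_rpow hD
        nlinarith

end Counting

theorem bipartite_few_neighborhood_subsets_general
    {V : Type*} [Fintype V] (G : SimpleGraph V) (X Y : Set V)
    (hdisj : Disjoint X Y) :
    (({X' : Set V | X'.Nonempty ∧ X' ⊆ X ∧ ∃ u ∈ Y, X' = G.neighborSet u}.ncard : ℝ)) ≤
      ((4 : ℝ) ^ (grad G 1) + 2 * grad G 1) * (X.ncard : ℝ) := by
  obtain ⟨R, hRY, hbij⟩ := Set.exists_subset_bijOn
    {u | u ∈ Y ∧ (G.neighborSet u).Nonempty ∧ G.neighborSet u ⊆ X} G.neighborSet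
  have hnbhds : {X' : Set V | X'.Nonempty ∧ X' ⊆ X ∧ ∃ u ∈ Y, X' = G.neighborSet u} =
      G.neighborSet '' R := by
    rw [hbij.image_eq]
    ext X'
    constructor
    · rintro ⟨hne, hX', u, hu, rfl⟩
      exact ⟨u, ⟨hu, hne, hX'⟩, rfl⟩
    · rintro ⟨u, ⟨hu, hne, hX'⟩, rfl⟩
      exact ⟨hne, hX', u, hu, rfl⟩
  rw [hnbhds, hbij.injOn.ncard_image]
  exact ncard_le_of_injOn_neighborSet (hdisj.symm.mono_left fun u hu => (hRY hu).1)
    (fun u hu => (hRY hu).2) hbij.injOn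

/-- In a finite bipartite graph with parts `X` and `Y`, the number of distinct nonempty
subsets `X' ⊆ X` that are the neighborhood of some vertex of `Y` is at most
`(4^{∇₁(G)} + 2∇₁(G))·|X|`. -/
theorem bipartite_few_neighborhood_subsets
    {V : Type*} [Fintype V] (G : SimpleGraph V) (X Y : Set V)
    (hunion : X ∪ Y = Set.univ) (hdisj : Disjoint X Y)
    (hbip : ∀ u v, G.Adj u v → (u ∈ X ∧ v ∈ Y) ∨ (u ∈ Y ∧ v ∈ X)) :
    (({X' : Set V | X'.Nonempty ∧ X' ⊆ X ∧ ∃ u ∈ Y, X' = G.neighborSet u}.ncard : ℝ)) ≤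
      ((4 : ℝ) ^ (grad G 1) + 2 * grad G 1) * (X.ncard : ℝ) :=
  bipartite_few_neighborhood_subsets_general G X Y hdisj
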